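/- Every mesonic glide of a weak composition a is also a glide of a; moreover, if b ≥ a in dominance order and b⁺ = a⁺, then every mesonic glide of b is a glide of a. -/

import Mathlib

abbrev Komp : Type := List (ℕ × Bool)

def kex (g : Komp) : ℕ := (g.filter (fun p => p.2)).length

def kval (g : Komp) : List ℕ := g.map Prod.fst

def toKomp (a : List ℕ) : Komp := a.map (fun v => (v, false))

inductive GlideMove : Komp → Komp → Prop
  | m1 (l r : Komp) (p : ℕ) (c : Bool) (hp : 0 < p) :
      GlideMove (l ++ (0, false) :: (p, c) :: r) (l ++ (p, c) :: (0, false) :: r)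
  | m2 (l r : Komp) (p q s : ℕ) (c : Bool) (hq : 0 < q) (hs : 0 < s) (h : q + s = p) :
      GlideMove (l ++ (0, false) :: (p, c) :: r) (l ++ (q, c) :: (s, false) :: r)
  | m3 (l r : Komp) (p q s : ℕ) (c : Bool) (hq : 0 < q) (hs : 0 < s) (h : q + s = p + 1) :
      GlideMove (l ++ (0, false) :: (p, c) :: r) (l ++ (q, c) :: (s, true) :: r)

def IsGlide (a : List ℕ) (g : Komp) : Prop :=
  Relation.ReflTransGen GlideMove (toKomp a) g

def BlackFirst (seg : Komp) : Prop :=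
  ∀ p ∈ (seg.dropWhile fun q => q.1 == 0).head?, p.2 = false

def IsBlock (v : ℕ) (seg : Komp) : Prop :=
  (kval seg).sum = v + kex seg ∧
  (∀ p ∈ seg, p.2 = true → 0 < p.1) ∧
  BlackFirst seg ∧
  (∀ p ∈ seg.getLast?, p.1 ≠ 0)

inductive MesonicGlide : List ℕ → Komp → Prop
  | zeros (k : ℕ) :
      MesonicGlide (List.replicate k 0) (List.replicate k ((0 : ℕ), false))
  | block (z v : ℕ) (hv : 0 < v) (seg : Komp) (a' : List ℕ) (g' : Komp)
      (hlen : seg.length = z + 1) (hseg : IsBlock v seg)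
      (h : MesonicGlide a' g') :
      MesonicGlide (List.replicate z 0 ++ v :: a') (seg ++ g')
def Dominates (b a : List ℕ) : Prop :=
  b.length = a.length ∧ ∀ i : ℕ, (a.take i).sum ≤ (b.take i).sum

def posPart (a : List ℕ) : List ℕ := a.filter (fun v => v != 0)

/-!
A block `seg` of value `v` is reached from `0 … 0 v` by splitting off its entries from the right:
the move `0 v ⇒ w x` (by (m.1), (m.2) or (m.3) according to `x`) leaves a shorter block of value
`w = v - x` (or `v + 1 - x` when `x` is red) to its left, and `w > 0` unless everything to the left
is a black zero. A mesonic glide of `b` is a concatenation of such blocks; if `b` dominates `a` and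
has the same nonzero entries, each nonzero entry of `a` sits at or to the right of the
corresponding entry of `b`, so it first slides left past zeros by (m.1) and then unfolds into
its block.
-/

open Relation List

local notation "𝟎" => ((0 : ℕ), false)

local infix:50 " ⟹* " => ReflTransGen GlideMove

theorem GlideMove.frame {g h : Komp} (c e : Komp) (H : GlideMove g h) :
    GlideMove (c ++ g ++ e) (c ++ h ++ e) := by
  cases H with
  | m1 l r p col hp => simpa using GlideMove.m1 (c ++ l) (r ++ e) p col hp
  | m2 l r p q s col hq hs h => simpa using GlideMove.m2 (c ++ l) (r ++ e) p q s col hq hs h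
  | m3 l r p q s col hq hs h => simpa using GlideMove.m3 (c ++ l) (r ++ e) p q s col hq hs h

theorem glides_frame {g h : Komp} (c e : Komp) (H : g ⟹* h) : c ++ g ++ e ⟹* c ++ h ++ e :=
  H.lift (fun x => c ++ x ++ e) fun _ _ => GlideMove.frame c e

theorem glides_slide_past_zeros {x : ℕ × Bool} (hx : 0 < x.1) :
    ∀ d : ℕ, replicate d 𝟎 ++ [x] ⟹* x :: replicate d 𝟎
  | 0 => .refl
  | d + 1 => by
    have hmove : GlideMove (replicate (d + 1) 𝟎 ++ [x]) (replicate d 𝟎 ++ [x] ++ [𝟎]) := by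
      simpa [replicate_succ'] using GlideMove.m1 (replicate d 𝟎) [] x.1 x.2 hx
    have := ReflTransGen.head hmove (glides_frame [] [𝟎] (glides_slide_past_zeros hx d))
    simpa [replicate_succ'] using this

theorem kex_cons (x : ℕ × Bool) (s : Komp) : kex (x :: s) = x.2.toNat + kex s := by
  cases h : x.2 <;> simp [kex, h, Nat.add_comm]

@[simp] theorem kex_append (s r : Komp) : kex (s ++ r) = kex s + kex r := by
  simp [kex, filter_append]

@[simp] theorem kval_append (s r : Komp) : kval (s ++ r) = kval s ++ kval r :=
  map_append ..

@[simp] theorem kex_singleton (x : ℕ × Bool) : kex [x] = x.2.toNat := by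
  rw [kex_cons]; rfl

@[simp] theorem kval_singleton (x : ℕ × Bool) : kval [x] = [x.1] := rfl

theorem sum_kval_cons (x : ℕ × Bool) (s : Komp) : (kval (x :: s)).sum = x.1 + (kval s).sum :=
  sum_cons

theorem toNat_le_of_red_pos {x : ℕ × Bool} (hx : x.2 = true → 0 < x.1) : x.2.toNat ≤ x.1 := by
  cases h : x.2
  · simp
  · simpa [Nat.one_le_iff_ne_zero, Nat.pos_iff_ne_zero] using hx h

theorem kex_le_sum_kval {s : Komp} (hred : ∀ x ∈ s, x.2 = true → 0 < x.1) :
    kex s ≤ (kval s).sum := by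
  induction s with
  | nil => rfl
  | cons x s ih =>
    rw [kex_cons, sum_kval_cons]
    have := toNat_le_of_red_pos (hred x mem_cons_self)
    have := ih fun y hy => hred y (mem_cons_of_mem _ hy)
    omega

@[simp] theorem blackFirst_zero_cons (c : Bool) (s : Komp) :
    BlackFirst ((0, c) :: s) ↔ BlackFirst s := by
  simp [BlackFirst]

theorem blackFirst_cons_of_ne_zero {x : ℕ × Bool} (hx : x.1 ≠ 0) (s : Komp) :
    BlackFirst (x :: s) ↔ x.2 = false := by
  simp [BlackFirst, hx]

theorem BlackFirst.of_append {s r : Komp} (h : BlackFirst (s ++ r)) : BlackFirst s := by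
  induction s with
  | nil => simp [BlackFirst]
  | cons x s ih =>
    by_cases hx : x.1 = 0
    · obtain ⟨_, c⟩ := x
      subst hx
      simp_all
    · exact (blackFirst_cons_of_ne_zero hx s).2 ((blackFirst_cons_of_ne_zero hx _).1 h)

@[simp] theorem blackFirst_replicate_zero_append (n : ℕ) (s : Komp) :
    BlackFirst (replicate n 𝟎 ++ s) ↔ BlackFirst s := by
  induction n with
  | zero => rfl
  | succ n ih => simpa [replicate_succ] using ih

/-- Since every red entry is positive, `kex s ≤ (kval s).sum` termwise, so equality forces every
entry to be `0` or a red `1`; the red `1`s are then excluded by `BlackFirst`. -/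
theorem eq_replicate_zero_of_sum_kval_eq_kex {s : Komp} (hred : ∀ x ∈ s, x.2 = true → 0 < x.1)
    (hbf : BlackFirst s) (hsum : (kval s).sum = kex s) : s = replicate s.length 𝟎 := by
  induction s with
  | nil => rfl
  | cons x s ih =>
    obtain ⟨p, c⟩ := x
    rw [kex_cons, sum_kval_cons] at hsum
    dsimp only at hsum
    have hs := kex_le_sum_kval fun y hy => hred y (mem_cons_of_mem _ hy)
    obtain rfl : p = 0 := by
      by_contra hp
      obtain rfl := (blackFirst_cons_of_ne_zero hp s).1 hbf
      simp only [Bool.toNat_false] at hsum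
      omega
    obtain rfl : c = false := by simpa using mt (hred _ mem_cons_self)
    exact congrArg (𝟎 :: ·) (ih (fun y hy => hred y (mem_cons_of_mem _ hy))
      ((blackFirst_zero_cons _ _).1 hbf) (by simpa using hsum))

theorem glides_block {seg : Komp} {v : ℕ} (hne : seg ≠ [])
    (hsum : (kval seg).sum = v + kex seg) (hred : ∀ x ∈ seg, x.2 = true → 0 < x.1)
    (hbf : BlackFirst seg) : replicate (seg.length - 1) 𝟎 ++ [(v, false)] ⟹* seg := by
  induction seg using reverseRecOn generalizing v with
  | nil => exact absurd rfl hne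
  | append_singleton seg x ih =>
    have hred' : ∀ y ∈ seg, y.2 = true → 0 < y.1 := fun y hy => hred y (mem_append_left _ hy)
    have hbf' := hbf.of_append
    have hle := kex_le_sum_kval hred'
    rw [kval_append, kex_append, sum_append, kval_singleton, sum_singleton, kex_singleton] at hsum
    simp only [length_append, length_singleton, Nat.add_sub_cancel]
    rcases hle.eq_or_lt with hzero | hpos
    · have hseg := eq_replicate_zero_of_sum_kval_eq_kex hred' hbf' hzero.symm
      obtain ⟨p, c⟩ := x
      cases c with
      | true =>
        rw [hseg, blackFirst_replicate_zero_append,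
          blackFirst_cons_of_ne_zero (hred _ (by simp) rfl).ne'] at hbf
        exact Bool.noConfusion hbf
      | false =>
        dsimp only at hsum
        rw [hseg, length_replicate, show p = v by simp at hsum; omega]
    · set w := (kval seg).sum - kex seg
      have hseg_ne : seg ≠ [] := by rintro rfl; simp [kval, kex] at hpos
      have hmove : GlideMove (replicate seg.length 𝟎 ++ [(v, false)])
          (replicate (seg.length - 1) 𝟎 ++ [(w, false)] ++ [x]) := by
        have hlen : seg.length = seg.length - 1 + 1 := by
          have := length_pos_iff.2 hseg_ne; omega
        rw [hlen, replicate_succ']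
        obtain ⟨p, c⟩ := x
        simp only [append_assoc, singleton_append, Nat.add_sub_cancel]
        cases c with
        | false =>
          simp only [Bool.toNat_false] at hsum
          rcases Nat.eq_zero_or_pos p with rfl | hp
          · simpa [show w = v by omega] using
              GlideMove.m1 (replicate (seg.length - 1) 𝟎) [] v false (by omega)
          · exact GlideMove.m2 _ [] v w p false (by omega) hp (by omega)
        | true =>
          simp only [Bool.toNat_true] at hsum
          exact GlideMove.m3 _ [] v w p false (by omega) (hred (p, true) (by simp) rfl) (by omega)
      exact .head hmove (glides_frame [] [x] (ih hseg_ne (by omega) hred' hbf'))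

@[simp] theorem posPart_replicate_zero_append (k : ℕ) (l : List ℕ) :
    _root_.posPart (replicate k 0 ++ l) = _root_.posPart l := by
  simp [_root_.posPart]

theorem posPart_cons_of_ne_zero {v : ℕ} (hv : v ≠ 0) (l : List ℕ) :
    _root_.posPart (v :: l) = v :: _root_.posPart l := by
  simp [_root_.posPart, hv]

theorem eq_replicate_zero_of_posPart_eq_nil {a : List ℕ} (h : _root_.posPart a = []) :
    a = replicate a.length 0 :=
  eq_replicate_length.2 fun x hx => by simpa using filter_eq_nil_iff.1 h x hx

theorem exists_eq_replicate_zero_append_of_posPart_eq_cons {a p : List ℕ} {v : ℕ}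
    (h : _root_.posPart a = v :: p) :
    ∃ m t, a = replicate m 0 ++ v :: t ∧ _root_.posPart t = p := by
  induction a with
  | nil => simp [_root_.posPart] at h
  | cons x a ih =>
    by_cases hx : x = 0
    · subst hx
      obtain ⟨m, t, rfl, ht⟩ := ih (by simpa [_root_.posPart] using h)
      exact ⟨m + 1, t, rfl, ht⟩
    · rw [posPart_cons_of_ne_zero hx, cons.injEq] at h
      obtain ⟨rfl, rfl⟩ := h
      exact ⟨0, a, rfl, rfl⟩

theorem Dominates.refl (a : List ℕ) : Dominates a a :=
  ⟨rfl, fun _ => le_rfl⟩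

theorem sum_take_replicate_zero_append (d i : ℕ) (l : List ℕ) :
    ((replicate d 0 ++ l).take i).sum = (l.take (i - d)).sum := by
  simp [take_append, take_replicate]

theorem Dominates.of_replicate_zero_append_cons {z m v : ℕ} {b a : List ℕ} (hv : 0 < v)
    (h : Dominates (replicate z 0 ++ v :: b) (replicate m 0 ++ v :: a)) :
    z ≤ m ∧ Dominates b (replicate (m - z) 0 ++ a) := by
  have hsums (i : ℕ) : ((v :: a).take (i - m)).sum ≤ ((v :: b).take (i - z)).sum := by
    simpa only [sum_take_replicate_zero_append] using h.2 i
  have hzm : z ≤ m := by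
    by_contra! hmz
    have := hsums (m + 1)
    simp [show m + 1 - m = 1 by omega, show m + 1 - z = 0 by omega] at this
    omega
  refine ⟨hzm, ?_, fun i => ?_⟩
  · have := h.1
    simp only [length_append, length_replicate, length_cons] at this ⊢
    omega
  · rw [sum_take_replicate_zero_append]
    rcases lt_or_ge i (m - z) with hi | hi
    · simp [show i - (m - z) = 0 by omega]
    · have := hsums (z + i + 1)
      rw [show z + i + 1 - m = i - (m - z) + 1 by omega, show z + i + 1 - z = i + 1 by omega,
        take_succ_cons, take_succ_cons, sum_cons, sum_cons] at this
      omega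

theorem MesonicGlide.isGlide_of_dominates {b : List ℕ} {g : Komp} (hg : MesonicGlide b g)
    {a : List ℕ} (hdom : Dominates b a) (hpos : _root_.posPart b = _root_.posPart a) :
    IsGlide a g := by
  induction hg generalizing a with
  | zeros k =>
    have ha := eq_replicate_zero_of_posPart_eq_nil (by simpa [_root_.posPart] using hpos.symm)
    rw [ha, ← hdom.1, length_replicate]
    simpa [IsGlide, toKomp] using ReflTransGen.refl
  | block z v hv seg b g hlen hseg _ ih =>
    rw [posPart_replicate_zero_append, posPart_cons_of_ne_zero hv.ne'] at hpos
    obtain ⟨m, t, rfl, ht⟩ := exists_eq_replicate_zero_append_of_posPart_eq_cons hpos.symm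
    obtain ⟨hzm, hdom'⟩ := hdom.of_replicate_zero_append_cons hv
    obtain ⟨d, rfl⟩ := Nat.exists_eq_add_of_le hzm
    rw [Nat.add_sub_cancel_left] at hdom'
    have hrest : replicate d 𝟎 ++ toKomp t ⟹* g := by
      simpa [IsGlide, toKomp] using ih hdom' (by simpa using ht.symm)
    have hblock : replicate z 𝟎 ++ [(v, false)] ⟹* seg := by
      simpa [hlen] using glides_block (by rintro rfl; simp at hlen) hseg.1 hseg.2.1 hseg.2.2.1
    have hslide : toKomp (replicate (z + d) 0 ++ v :: t) ⟹*
        replicate z 𝟎 ++ [(v, false)] ++ (replicate d 𝟎 ++ toKomp t) := by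
      simpa [toKomp, replicate_add, -replicate_append_replicate] using
        glides_frame (replicate z 𝟎) (toKomp t) (glides_slide_past_zeros (x := (v, false)) hv d)
    have hunfold : replicate z 𝟎 ++ [(v, false)] ++ (replicate d 𝟎 ++ toKomp t) ⟹* seg ++ g := by
      have hfirst := glides_frame [] (replicate d 𝟎 ++ toKomp t) hblock
      have hsecond := glides_frame seg [] hrest
      simp only [nil_append, append_nil] at hfirst hsecond
      exact hfirst.trans hsecond
    exact hslide.trans hunfold

theorem stmt2 (a : List ℕ) :
    (∀ g : Komp, MesonicGlide a g → IsGlide a g) ∧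
    (∀ (b : List ℕ) (g : Komp), Dominates b a → posPart b = posPart a →
      MesonicGlide b g → IsGlide a g) :=
  ⟨fun _ hg => hg.isGlide_of_dominates (.refl a) rfl,
    fun _ _ hdom hpos hg => hg.isGlide_of_dominates hdom hpos⟩
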